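/- arXiv:2003.01411 — 7 statements merged into one kernel-verified Lean document; each statement's English description precedes it below -/
import Mathlib

section
/- Let f : (0,∞) → ℝ be three times continuously differentiable with f''(x) > 0 for all x > 0. Then the Bregman divergence b_f(p, q) = f(p) − f(q) − (p − q)·f'(q) is jointly convex on {(p, q) ∈ ℝ² : p > 0, q > 0} if and only if the function x ↦ 1/f''(x) is concave on (0,∞). -/
/-! Both sides are equivalent to the pointwise inequality
`f''(q)² ≤ f''(p) (f''(q) - (p - q) f'''(q))` for all `p, q > 0`.
For `1 / f''` this is the tangent-line inequality at `q`, after clearing the denominators.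
Along the line through `(p, q)` with direction `(u, w)`, the Bregman divergence has second
derivative `f''(p) u² - 2 f''(q) u w + (f''(q) - (p - q) f'''(q)) w²`; joint convexity means that
this binary quadratic form is positive semidefinite at every point, and since `f''(p) > 0` that
is the same inequality. -/

open Set

theorem forall_quadratic_form_nonneg_iff {a b c : ℝ} (ha : 0 < a) :
    (∀ u w : ℝ, 0 ≤ a * u ^ 2 - 2 * b * u * w + c * w ^ 2) ↔ b ^ 2 ≤ a * c := by
  constructor
  · intro h
    -- at `(u, w) = (b, a)` the form equals `a (a c - b²)`
    have := h b a
    nlinarith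
  · intro h u w
    -- `a` times the form is `(a u - b w)² + (a c - b²) w²`
    have : 0 ≤ a * (a * u ^ 2 - 2 * b * u * w + c * w ^ 2) := by
      nlinarith [sq_nonneg (a * u - b * w), mul_nonneg (sq_nonneg w) (sub_nonneg.2 h)]
    exact (mul_nonneg_iff_of_pos_left ha).1 this

theorem convexOn_iff_forall_deriv2_nonneg_of_isOpen {I : Set ℝ} (hIo : IsOpen I)
    (hI : Convex ℝ I) {φ φ' φ'' : ℝ → ℝ} (hφ : ∀ t ∈ I, HasDerivAt φ (φ' t) t)
    (hφ' : ∀ t ∈ I, HasDerivAt φ' (φ'' t) t) :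
    ConvexOn ℝ I φ ↔ ∀ t ∈ I, 0 ≤ φ'' t := by
  constructor
  · intro hconv t ht
    have hmono : MonotoneOn φ' I :=
      (hconv.monotoneOn_deriv fun s hs => (hφ s hs).differentiableAt).congr
        fun s hs => (hφ s hs).deriv
    exact (hφ' t ht).hasDerivWithinAt.nonneg_of_monotoneOn
      (hIo.uniqueDiffWithinAt (𝕜 := ℝ) ht).accPt hmono
  · intro h
    refine convexOn_of_hasDerivWithinAt2_nonneg (f' := φ') (f'' := φ'') hI
      (fun t ht => (hφ t ht).continuousAt.continuousWithinAt) ?_ ?_ ?_ <;> rw [hIo.interior_eq]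
    · exact fun t ht => (hφ t ht).hasDerivWithinAt
    · exact fun t ht => (hφ' t ht).hasDerivWithinAt
    · exact h

theorem concaveOn_iff_forall_le_tangent {s : Set ℝ} (hso : IsOpen s) (hs : Convex ℝ s)
    {g g' : ℝ → ℝ} (hg : ∀ x ∈ s, HasDerivAt g (g' x) x) :
    ConcaveOn ℝ s g ↔ ∀ x ∈ s, ∀ y ∈ s, g y ≤ g x + g' x * (y - x) := by
  constructor
  · intro hc x hx y hy
    rcases lt_trichotomy y x with h | rfl | h
    · have h1 := hc.le_slope_of_hasDerivAt hy hx h (hg x hx)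
      rw [slope_def_field, le_div_iff₀ (sub_pos.2 h)] at h1
      nlinarith
    · simp
    · have h1 := hc.slope_le_of_hasDerivAt hx hy h (hg x hx)
      rw [slope_def_field, div_le_iff₀ (sub_pos.2 h)] at h1
      nlinarith
  · intro h
    refine AntitoneOn.concaveOn_of_deriv hs
      (fun x hx => (hg x hx).continuousAt.continuousWithinAt) ?_ ?_ <;> rw [hso.interior_eq]
    · exact fun x hx => (hg x hx).differentiableAt.differentiableWithinAt
    · intro x hx y hy hxy
      rw [(hg x hx).deriv, (hg y hy).deriv]
      rcases hxy.eq_or_lt with rfl | hlt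
      · rfl
      · nlinarith [h x hx y hy, h y hy x hx, sub_pos.2 hlt]

section Line

variable {E : Type*} [AddCommGroup E] [Module ℝ E]

theorem Convex.line_preimage {s : Set E} (hs : Convex ℝ s) (x v : E) :
    Convex ℝ {t : ℝ | x + t • v ∈ s} := by
  have e : {t : ℝ | x + t • v ∈ s} = AffineMap.lineMap x (x + v) ⁻¹' s := by
    ext
    simp [AffineMap.lineMap_apply, add_comm]
  exact e ▸ hs.affine_preimage _

theorem convexOn_iff_forall_convexOn_line {s : Set E} {F : E → ℝ} :
    ConvexOn ℝ s F ↔ ∀ x ∈ s, ∀ v : E,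
      ConvexOn ℝ {t : ℝ | x + t • v ∈ s} fun t => F (x + t • v) := by
  constructor
  · intro hF x _ v
    convert hF.comp_affineMap (AffineMap.lineMap x (x + v)) using 1 <;> ext <;>
      simp [AffineMap.lineMap_apply, add_comm]
  · intro h
    have combo : ∀ {x y : E} {a b : ℝ}, a + b = 1 →
        x + b • (y - x) = a • x + b • y := by
      intro x y a b hab
      linear_combination (norm := module) -hab • x
    have h0 : ∀ {x : E} (v : E), x ∈ s → (0 : ℝ) ∈ {t : ℝ | x + t • v ∈ s} := by simp
    have h1 : ∀ {x y : E}, y ∈ s → (1 : ℝ) ∈ {t : ℝ | x + t • (y - x) ∈ s} := by simp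
    refine ⟨fun x hx y hy a b ha hb hab => ?_, fun x hx y hy a b ha hb hab => ?_⟩
    · simpa [← combo hab] using (h x hx (y - x)).1 (h0 _ hx) (h1 hy) ha hb hab
    · simpa [← combo hab] using (h x hx (y - x)).2 (h0 _ hx) (h1 hy) ha hb hab

end Line

section Directional

variable {E : Type*} [AddCommGroup E] [Module ℝ E] [TopologicalSpace E]
  [IsTopologicalAddGroup E] [ContinuousSMul ℝ E]

theorem convexOn_iff_forall_deriv2_line_nonneg {s : Set E} (hso : IsOpen s) (hs : Convex ℝ s)
    {F : E → ℝ} {F' F'' : E → E → ℝ}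
    (hF : ∀ x ∈ s, ∀ v, HasDerivAt (fun t : ℝ => F (x + t • v)) (F' x v) 0)
    (hF' : ∀ x ∈ s, ∀ v, HasDerivAt (fun t : ℝ => F' (x + t • v) v) (F'' x v) 0) :
    ConvexOn ℝ s F ↔ ∀ x ∈ s, ∀ v, 0 ≤ F'' x v := by
  have shift : ∀ {G : E → ℝ} {d : ℝ} {x v : E} {t : ℝ},
      HasDerivAt (fun r : ℝ => G (x + t • v + r • v)) d 0 →
        HasDerivAt (fun r : ℝ => G (x + r • v)) d t := by
    intro G d x v t h
    have e : (fun r : ℝ => G (x + r • v)) = fun r => G (x + t • v + (r - t) • v) := by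
      ext r
      rw [add_assoc, ← add_smul, add_sub_cancel]
    rw [e]
    exact HasDerivAt.comp_sub_const t t (by rwa [sub_self])
  have hline : ∀ x v, ConvexOn ℝ {t : ℝ | x + t • v ∈ s} (fun t => F (x + t • v)) ↔
      ∀ t ∈ {t : ℝ | x + t • v ∈ s}, 0 ≤ F'' (x + t • v) v := fun x v =>
    convexOn_iff_forall_deriv2_nonneg_of_isOpen (φ' := fun t => F' (x + t • v) v)
      (hso.preimage (continuous_const.add (continuous_id.smul continuous_const)))
      (hs.line_preimage x v)
      (fun t ht => shift (hF _ ht v)) (fun t ht => shift (G := (F' · v)) (hF' _ ht v))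
  simp only [convexOn_iff_forall_convexOn_line, hline, mem_ofPred_eq]
  exact ⟨fun h x hx v => by simpa using h x hx v 0 (by simpa using hx),
    fun h x _ v t ht => h _ ht v⟩

end Directional

theorem ContDiffOn.hasDerivAt_deriv {f : ℝ → ℝ} {U : Set ℝ} {n : WithTop ℕ∞}
    (hf : ContDiffOn ℝ n f U) (hU : IsOpen U) (hn : n ≠ 0) {x : ℝ} (hx : x ∈ U) :
    HasDerivAt f (deriv f x) x :=
  ((hf.differentiableOn hn).differentiableAt (hU.mem_nhds hx)).hasDerivAt

theorem HasDerivAt.comp_add_mul_zero {g : ℝ → ℝ} {d a : ℝ} (hg : HasDerivAt g d a) (c : ℝ) :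
    HasDerivAt (fun t => g (a + t * c)) (d * c) 0 := by
  have hl : HasDerivAt (fun t : ℝ => a + t * c) c 0 := by
    simpa using ((hasDerivAt_id 0).mul_const c).const_add a
  exact hg.comp_of_eq 0 hl (by simp)

noncomputable section Bregman

def bregman (f : ℝ → ℝ) (x : ℝ × ℝ) : ℝ := f x.1 - f x.2 - (x.1 - x.2) * deriv f x.2

def bregmanLineDeriv (f : ℝ → ℝ) (x v : ℝ × ℝ) : ℝ :=
  v.1 * deriv f x.1 - v.1 * deriv f x.2 - (x.1 - x.2) * v.2 * deriv (deriv f) x.2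

def bregmanLineDeriv2 (f : ℝ → ℝ) (x v : ℝ × ℝ) : ℝ :=
  deriv (deriv f) x.1 * v.1 ^ 2 - 2 * deriv (deriv f) x.2 * v.1 * v.2
    + (deriv (deriv f) x.2 - (x.1 - x.2) * deriv (deriv (deriv f)) x.2) * v.2 ^ 2

variable {f : ℝ → ℝ} {U : Set ℝ}

theorem hasDerivAt_bregman_line (hU : IsOpen U) (hf : ContDiffOn ℝ 3 f U) {x : ℝ × ℝ} (hx : x ∈ U ×ˢ U) (v : ℝ × ℝ) :
    HasDerivAt (fun t : ℝ => bregman f (x + t • v)) (bregmanLineDeriv f x v) 0 := by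
  obtain ⟨hx₁, hx₂⟩ := hx
  have f'₁ := (hf.hasDerivAt_deriv hU (by norm_num) hx₁).comp_add_mul_zero v.1
  have f'₂ := (hf.hasDerivAt_deriv hU (by norm_num) hx₂).comp_add_mul_zero v.2
  have f''₂ := ((hf.deriv_of_isOpen (m := 2) hU (by norm_num)).hasDerivAt_deriv hU
    (by norm_num) hx₂).comp_add_mul_zero v.2
  have id₁ := (hasDerivAt_id x.1).comp_add_mul_zero v.1
  have id₂ := (hasDerivAt_id x.2).comp_add_mul_zero v.2
  simp only [bregman, Prod.fst_add, Prod.snd_add, Prod.smul_fst, Prod.smul_snd, smul_eq_mul]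
  refine ((f'₁.sub f'₂).sub ((id₁.sub id₂).mul f''₂)).congr_deriv ?_
  simp only [bregmanLineDeriv, Pi.sub_apply, id_eq, zero_mul, add_zero]
  ring

theorem hasDerivAt_bregmanLineDeriv_line (hU : IsOpen U) (hf : ContDiffOn ℝ 3 f U)
    {x : ℝ × ℝ} (hx : x ∈ U ×ˢ U) (v : ℝ × ℝ) :
    HasDerivAt (fun t : ℝ => bregmanLineDeriv f (x + t • v) v) (bregmanLineDeriv2 f x v) 0 := by
  obtain ⟨hx₁, hx₂⟩ := hx
  have hf' := hf.deriv_of_isOpen (m := 2) hU (by norm_num)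
  have f''₁ := (hf'.hasDerivAt_deriv hU (by norm_num) hx₁).comp_add_mul_zero v.1
  have f''₂ := (hf'.hasDerivAt_deriv hU (by norm_num) hx₂).comp_add_mul_zero v.2
  have f'''₂ := ((hf'.deriv_of_isOpen (m := 1) hU (by norm_num)).hasDerivAt_deriv hU
    (by norm_num) hx₂).comp_add_mul_zero v.2
  have id₁ := (hasDerivAt_id x.1).comp_add_mul_zero v.1
  have id₂ := (hasDerivAt_id x.2).comp_add_mul_zero v.2
  simp only [bregmanLineDeriv, Prod.fst_add, Prod.snd_add, Prod.smul_fst, Prod.smul_snd,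
    smul_eq_mul]
  refine (((f''₁.const_mul v.1).sub (f''₂.const_mul v.1)).sub
    (((id₁.sub id₂).mul_const v.2).mul f'''₂)).congr_deriv ?_
  simp only [bregmanLineDeriv2, Pi.sub_apply, id_eq, zero_mul, add_zero]
  ring

theorem convexOn_bregman_iff (hU : IsOpen U) (hf : ContDiffOn ℝ 3 f U) (hUc : Convex ℝ U) (hf'' : ∀ x ∈ U, 0 < deriv (deriv f) x) :
    ConvexOn ℝ (U ×ˢ U) (bregman f) ↔ ∀ p ∈ U, ∀ q ∈ U,
      deriv (deriv f) q ^ 2 ≤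
        deriv (deriv f) p * (deriv (deriv f) q - (p - q) * deriv (deriv (deriv f)) q) := by
  rw [convexOn_iff_forall_deriv2_line_nonneg (hU.prod hU) (hUc.prod hUc)
    (fun _ hx => hasDerivAt_bregman_line hU hf hx)
    (fun _ hx => hasDerivAt_bregmanLineDeriv_line hU hf hx)]
  constructor
  · intro h p hp q hq
    exact (forall_quadratic_form_nonneg_iff (hf'' p hp)).1 fun u w => h (p, q) ⟨hp, hq⟩ (u, w)
  · rintro h ⟨p, q⟩ ⟨hp, hq⟩ ⟨u, w⟩
    exact (forall_quadratic_form_nonneg_iff (hf'' p hp)).2 (h p hp q hq) u w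

end Bregman

theorem concaveOn_one_div_iff {g : ℝ → ℝ} {U : Set ℝ} (hU : IsOpen U) (hUc : Convex ℝ U)
    (hg : DifferentiableOn ℝ g U) (hpos : ∀ x ∈ U, 0 < g x) :
    ConcaveOn ℝ U (fun x => 1 / g x) ↔
      ∀ p ∈ U, ∀ q ∈ U, g q ^ 2 ≤ g p * (g q - (p - q) * deriv g q) := by
  have hinv : ∀ x ∈ U, HasDerivAt (fun x => 1 / g x) (-deriv g x / g x ^ 2) x := fun x hx => by
    simpa using (hasDerivAt_const x (1 : ℝ)).fun_div (hg.differentiableAt (hU.mem_nhds hx)).hasDerivAt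
      (hpos x hx).ne'
  have tangent_iff : ∀ p ∈ U, ∀ q ∈ U, 1 / g p ≤ 1 / g q + -deriv g q / g q ^ 2 * (p - q) ↔
      g q ^ 2 ≤ g p * (g q - (p - q) * deriv g q) := by
    intro p hp q hq
    have hq' := (hpos q hq).ne'
    rw [show 1 / g q + -deriv g q / g q ^ 2 * (p - q) = (g q - (p - q) * deriv g q) / g q ^ 2 by
      field_simp; ring, div_le_div_iff₀ (hpos p hp) (by positivity), one_mul, mul_comm]
  rw [concaveOn_iff_forall_le_tangent hU hUc hinv]
  exact ⟨fun h p hp q hq => (tangent_iff p hp q hq).1 (h q hq p hp),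
    fun h q hq p hp => (tangent_iff p hp q hq).2 (h p hp q hq)⟩

/-- For `f` three times continuously differentiable on `(0,∞)` with
`f'' > 0` there, the Bregman divergence `(p,q) ↦ f p - f q - (p - q) * f' q` is
jointly convex on the open positive quadrant iff `x ↦ 1 / f'' x` is concave on `(0,∞)`. -/
theorem statement4 (f : ℝ → ℝ) (hf : ContDiffOn ℝ 3 f (Set.Ioi 0))
    (hf'' : ∀ x ∈ Set.Ioi (0 : ℝ), 0 < deriv (deriv f) x) :
    ConvexOn ℝ {x : ℝ × ℝ | 0 < x.1 ∧ 0 < x.2}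
        (fun x => f x.1 - f x.2 - (x.1 - x.2) * deriv f x.2) ↔
      ConcaveOn ℝ (Set.Ioi 0) (fun x => 1 / deriv (deriv f) x) := by
  have hf''' : DifferentiableOn ℝ (deriv (deriv f)) (Ioi 0) :=
    ((hf.deriv_of_isOpen (m := 2) isOpen_Ioi (by norm_num)).deriv_of_isOpen (m := 1) isOpen_Ioi
      (by norm_num)).differentiableOn one_ne_zero
  exact (convexOn_bregman_iff isOpen_Ioi hf (convex_Ioi 0) hf'').trans
    (concaveOn_one_div_iff isOpen_Ioi (convex_Ioi 0) hf''' hf'').symm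
end

section
/- (Burbea–Rao) Let f : (0,∞) → ℝ be twice continuously differentiable with f''(x) > 0 for all x > 0, and let 0 < α < 1. Then the Jensen divergence j_f^α(p, q) = α·f(p) + (1−α)·f(q) − f(αp + (1−α)q) is jointly convex on {(p, q) ∈ ℝ² : p > 0, q > 0} if and only if the function x ↦ 1/f''(x) is concave on (0,∞). -/
/-!
At a point `(p, q)` of the segment `t ↦ x + t • d` the divergence has second derivative
`α d₁² f''(p) + (1 - α) d₂² f''(q) - (α d₁ + (1 - α) d₂)² f''(α p + (1 - α) q)`.
By the weighted Cauchy–Schwarz inequality this is nonnegative for every `d` exactly when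
`α / f''(p) + (1 - α) / f''(q) ≤ 1 / f''(α p + (1 - α) q)`, the extremal direction being
`d = (1 / f''(p), 1 / f''(q))`. So joint convexity amounts to Jensen's inequality for `1 / f''`
with the single weight `α`. For a continuous function this already gives concavity: the set of
weights for which Jensen's inequality holds is closed, contains `0` and `1` and is stable under
`(s, t) ↦ α s + (1 - α) t`, hence it is all of `[0, 1]`.
-/

open Set Filter

lemma Icc_subset_of_isClosed_of_combo_mem {α : ℝ} (hα0 : 0 < α) (hα1 : α < 1) {S : Set ℝ}
    (hS : IsClosed S) (h0 : (0 : ℝ) ∈ S) (h1 : (1 : ℝ) ∈ S)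
    (hcomb : ∀ x ∈ S, ∀ y ∈ S, α * x + (1 - α) * y ∈ S) : Icc 0 1 ⊆ S := by
  rintro t ⟨ht0, ht1⟩
  by_contra htS
  have hL : sSup (S ∩ Icc 0 t) ∈ S ∩ Icc 0 t :=
    (hS.inter isClosed_Icc).csSup_mem ⟨0, h0, le_rfl, ht0⟩ (bddAbove_Icc.mono inter_subset_right)
  have hR : sInf (S ∩ Icc t 1) ∈ S ∩ Icc t 1 :=
    (hS.inter isClosed_Icc).csInf_mem ⟨1, h1, ht1, le_rfl⟩ (bddBelow_Icc.mono inter_subset_right)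
  set a := sSup (S ∩ Icc 0 t)
  set b := sInf (S ∩ Icc t 1)
  -- `(a, b)` is a gap of `S` around `t`, yet `α a + (1 - α) b ∈ S` lies strictly inside it.
  have hat : a < t := hL.2.2.lt_of_ne fun h => htS (h ▸ hL.1)
  have htb : t < b := hR.2.1.lt_of_ne fun h => htS (h ▸ hR.1)
  have hc := hcomb a hL.1 b hR.1
  rcases le_or_gt (α * a + (1 - α) * b) t with hct | htc
  · have : α * a + (1 - α) * b ≤ a :=
      le_csSup (bddAbove_Icc.mono inter_subset_right) ⟨hc, by nlinarith [hL.2.1], hct⟩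
    nlinarith
  · have : b ≤ α * a + (1 - α) * b :=
      csInf_le (bddBelow_Icc.mono inter_subset_right) ⟨hc, htc.le, by nlinarith [hR.2.2]⟩
    nlinarith

lemma ContinuousOn.concaveOn_of_fixed_weight {E : Type*} [AddCommGroup E] [Module ℝ E]
    [TopologicalSpace E] [ContinuousAdd E] [ContinuousSMul ℝ E] {s : Set E} {h : E → ℝ}
    (hh : ContinuousOn h s) (hs : Convex ℝ s) {α : ℝ} (hα0 : 0 < α) (hα1 : α < 1)
    (hcomb : ∀ p ∈ s, ∀ q ∈ s, α * h p + (1 - α) * h q ≤ h (α • p + (1 - α) • q)) :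
    ConcaveOn ℝ s h := by
  set S := Icc 0 1 ∩ ⋂ p ∈ s, ⋂ q ∈ s,
    {t ∈ Icc (0 : ℝ) 1 | t * h p + (1 - t) * h q ≤ h (t • p + (1 - t) • q)}
  have mem_S {t : ℝ} : t ∈ S ↔
      t ∈ Icc 0 1 ∧ ∀ p ∈ s, ∀ q ∈ s, t * h p + (1 - t) * h q ≤ h (t • p + (1 - t) • q) := by
    simp only [S, mem_inter_iff, mem_iInter, mem_ofPred_eq]
    exact and_congr_right fun ht => forall₂_congr fun _ _ => forall₂_congr fun _ _ =>
      and_iff_right ht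
  have hS : IsClosed S := isClosed_Icc.inter <| isClosed_biInter fun p hp =>
    isClosed_biInter fun q hq => isClosed_Icc.isClosed_le (by fun_prop) <|
      hh.comp (by fun_prop) fun t ht => hs hp hq ht.1 (sub_nonneg.2 ht.2) (by ring)
  have hcombS : ∀ t₁ ∈ S, ∀ t₂ ∈ S, α * t₁ + (1 - α) * t₂ ∈ S := by
    intro t₁ ht₁ t₂ ht₂
    rw [mem_S] at ht₁ ht₂ ⊢
    refine ⟨convex_Icc 0 1 ht₁.1 ht₂.1 hα0.le (by linarith) (by ring), fun p hp q hq => ?_⟩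
    have hP₁ : t₁ • p + (1 - t₁) • q ∈ s := hs hp hq ht₁.1.1 (sub_nonneg.2 ht₁.1.2) (by ring)
    have hP₂ : t₂ • p + (1 - t₂) • q ∈ s := hs hp hq ht₂.1.1 (sub_nonneg.2 ht₂.1.2) (by ring)
    calc (α * t₁ + (1 - α) * t₂) * h p + (1 - (α * t₁ + (1 - α) * t₂)) * h q
        = α * (t₁ * h p + (1 - t₁) * h q) + (1 - α) * (t₂ * h p + (1 - t₂) * h q) := by ring
      _ ≤ α * h (t₁ • p + (1 - t₁) • q) + (1 - α) * h (t₂ • p + (1 - t₂) • q) := by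
        gcongr
        · exact ht₁.2 p hp q hq
        · exact ht₂.2 p hp q hq
      _ ≤ h (α • (t₁ • p + (1 - t₁) • q) + (1 - α) • (t₂ • p + (1 - t₂) • q)) :=
        hcomb _ hP₁ _ hP₂
      _ = h ((α * t₁ + (1 - α) * t₂) • p + (1 - (α * t₁ + (1 - α) * t₂)) • q) := by
        congr 1; module
  have hIcc : Icc 0 1 ⊆ S := Icc_subset_of_isClosed_of_combo_mem hα0 hα1 hS
    (mem_S.2 ⟨left_mem_Icc.2 zero_le_one, fun p _ q _ => by simp⟩)
    (mem_S.2 ⟨right_mem_Icc.2 zero_le_one, fun p _ q _ => by simp⟩) hcombS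
  refine ⟨hs, fun p hp q hq a b ha hb hab => ?_⟩
  obtain rfl : b = 1 - a := eq_sub_of_add_eq' hab
  exact (mem_S.1 (hIcc ⟨ha, by linarith⟩)).2 p hp q hq

lemma convexOn_iff_forall_convexOn_line_s5 {𝕜 E β : Type*} [Field 𝕜] [LinearOrder 𝕜]
    [IsStrictOrderedRing 𝕜] [AddCommGroup E] [Module 𝕜 E] [AddCommGroup β] [PartialOrder β]
    [IsOrderedAddMonoid β] [Module 𝕜 β] {s : Set E} {F : E → β} (hs : Convex 𝕜 s) :
    ConvexOn 𝕜 s F ↔ ∀ x ∈ s, ∀ y ∈ s, ConvexOn 𝕜 (Icc 0 1) fun t : 𝕜 => F (x + t • (y - x)) := by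
  constructor
  · intro hF x hx y hy
    have hline : (F ∘ AffineMap.lineMap x y) = fun t : 𝕜 => F (x + t • (y - x)) := by
      funext t
      simp only [Function.comp_apply, AffineMap.lineMap_apply_module', add_comm]
    rw [← hline]
    exact (hF.comp_affineMap _).subset (fun t ht => hs.lineMap_mem hx hy ht) (convex_Icc 0 1)
  · refine fun hF => ⟨hs, fun x hx y hy a b ha hb hab => ?_⟩
    have := (hF x hx y hy).2 (left_mem_Icc.2 zero_le_one) (right_mem_Icc.2 zero_le_one) ha hb hab
    obtain rfl : a = 1 - b := eq_sub_of_add_eq hab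
    convert this using 2 <;> simp only [smul_eq_mul, mul_one, zero_smul,
      add_zero, one_smul, add_sub_cancel]
    module

lemma convexOn_Icc_iff_forall_nonneg {φ φ' φ'' : ℝ → ℝ} {a b : ℝ} (hab : a < b)
    (hφ : ∀ t ∈ Icc a b, HasDerivAt φ (φ' t) t) (hφ' : ∀ t ∈ Icc a b, HasDerivAt φ' (φ'' t) t) :
    ConvexOn ℝ (Icc a b) φ ↔ ∀ t ∈ Icc a b, 0 ≤ φ'' t := by
  constructor
  · intro hconv t ht
    have hmono : MonotoneOn φ' (Icc a b) := fun x hx y hy hxy => by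
      simpa only [(hφ x hx).deriv, (hφ y hy).deriv] using
        hconv.monotoneOn_deriv (fun s hs => (hφ s hs).differentiableAt) hx hy hxy
    exact (hφ' t ht).hasDerivWithinAt.nonneg_of_monotoneOn
      (uniqueDiffWithinAt_iff_accPt.1 (uniqueDiffOn_Icc hab t ht)) hmono
  · intro hnonneg
    refine convexOn_of_hasDerivWithinAt2_nonneg (f' := φ') (f'' := φ'') (convex_Icc a b)
      (fun t ht => (hφ t ht).continuousAt.continuousWithinAt) ?_ ?_ ?_ <;>
      rw [interior_Icc] <;> intro t ht
    · exact (hφ t (Ioo_subset_Icc_self ht)).hasDerivWithinAt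
    · exact (hφ' t (Ioo_subset_Icc_self ht)).hasDerivWithinAt
    · exact hnonneg t (Ioo_subset_Icc_self ht)

lemma ContDiffOn.hasDerivAt_deriv_deriv {f : ℝ → ℝ} {s : Set ℝ} (hf : ContDiffOn ℝ 2 f s)
    (hs : IsOpen s) {y : ℝ} (hy : y ∈ s) :
    HasDerivAt f (deriv f y) y ∧ HasDerivAt (deriv f) (deriv (deriv f) y) y :=
  ⟨((hf.differentiableOn two_ne_zero).differentiableAt (hs.mem_nhds hy)).hasDerivAt,
    (((hf.deriv_of_isOpen hs (by norm_num) : ContDiffOn ℝ 1 (deriv f) s).differentiableOn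
      one_ne_zero).differentiableAt (hs.mem_nhds hy)).hasDerivAt⟩

lemma ContDiffOn.continuousOn_deriv_deriv {f : ℝ → ℝ} {s : Set ℝ} (hf : ContDiffOn ℝ 2 f s)
    (hs : IsOpen s) : ContinuousOn (deriv (deriv f)) s :=
  (hf.deriv_of_isOpen hs (by norm_num) : ContDiffOn ℝ 1 (deriv f) s).continuousOn_deriv_of_isOpen
    hs le_rfl

-- `jensenCombo α (1 - α) 1 α f` is the Jensen divergence; the extra coefficients make the family
-- closed under differentiation along lines.
def jensenCombo (a b c α : ℝ) (F : ℝ → ℝ) (z : ℝ × ℝ) : ℝ :=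
  a * F z.1 + b * F z.2 - c * F (α * z.1 + (1 - α) * z.2)

def jensenHessian (g : ℝ → ℝ) (α : ℝ) (z d : ℝ × ℝ) : ℝ :=
  α * d.1 ^ 2 * g z.1 + (1 - α) * d.2 ^ 2 * g z.2
    - (α * d.1 + (1 - α) * d.2) ^ 2 * g (α * z.1 + (1 - α) * z.2)

lemma HasDerivAt.comp_add_mul {F F' : ℝ → ℝ} {y e t : ℝ}
    (hF : HasDerivAt F (F' (y + t * e)) (y + t * e)) :
    HasDerivAt (fun s => F (y + s * e)) (e * F' (y + t * e)) t := by
  have := hF.comp t (((hasDerivAt_id' t).mul_const e).const_add y)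
  rwa [one_mul, mul_comm] at this

lemma hasDerivAt_jensenCombo_line {F F' : ℝ → ℝ} {a b c α t : ℝ} {x d : ℝ × ℝ}
    (h₁ : HasDerivAt F (F' (x + t • d).1) (x + t • d).1)
    (h₂ : HasDerivAt F (F' (x + t • d).2) (x + t • d).2)
    (h₃ : HasDerivAt F (F' (α * (x + t • d).1 + (1 - α) * (x + t • d).2))
      (α * (x + t • d).1 + (1 - α) * (x + t • d).2)) :
    HasDerivAt (fun s => jensenCombo a b c α F (x + s • d))
      (jensenCombo (a * d.1) (b * d.2) (c * (α * d.1 + (1 - α) * d.2)) α F' (x + t • d)) t := by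
  simp only [Prod.fst_add, Prod.snd_add, Prod.smul_fst, Prod.smul_snd, smul_eq_mul] at h₁ h₂ h₃
  rw [show α * (x.1 + t * d.1) + (1 - α) * (x.2 + t * d.2)
    = (α * x.1 + (1 - α) * x.2) + t * (α * d.1 + (1 - α) * d.2) by ring] at h₃
  refine ((((h₁.comp_add_mul).const_mul a).add ((h₂.comp_add_mul).const_mul b)).sub
    ((h₃.comp_add_mul).const_mul c)).congr_deriv ?_ |>.congr_of_eventuallyEq ?_
  · simp only [jensenCombo, Prod.fst_add, Prod.snd_add, Prod.smul_fst, Prod.smul_snd, smul_eq_mul]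
    ring_nf
  · refine Eventually.of_forall fun s => ?_
    simp only [jensenCombo, Prod.fst_add, Prod.snd_add, Prod.smul_fst, Prod.smul_snd, smul_eq_mul,
      Pi.add_apply, Pi.sub_apply]
    ring_nf

lemma mem_Ioi_combo {α : ℝ} (hα0 : 0 ≤ α) (hα1 : α ≤ 1) {z : ℝ × ℝ}
    (hz : z ∈ Ioi (0 : ℝ) ×ˢ Ioi (0 : ℝ)) : α * z.1 + (1 - α) * z.2 ∈ Ioi (0 : ℝ) :=
  convex_Ioi 0 hz.1 hz.2 hα0 (sub_nonneg.2 hα1) (by ring)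

lemma convexOn_jensenCombo_iff {f : ℝ → ℝ} (hf : ContDiffOn ℝ 2 f (Ioi 0)) {α : ℝ}
    (hα0 : 0 ≤ α) (hα1 : α ≤ 1) :
    ConvexOn ℝ (Ioi (0 : ℝ) ×ˢ Ioi (0 : ℝ)) (jensenCombo α (1 - α) 1 α f) ↔
      ∀ x ∈ Ioi (0 : ℝ) ×ˢ Ioi (0 : ℝ), ∀ y ∈ Ioi (0 : ℝ) ×ˢ Ioi (0 : ℝ), ∀ t ∈ Icc (0 : ℝ) 1,
        0 ≤ jensenHessian (deriv (deriv f)) α (x + t • (y - x)) (y - x) := by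
  have hU : Convex ℝ (Ioi (0 : ℝ) ×ˢ Ioi (0 : ℝ)) := (convex_Ioi 0).prod (convex_Ioi 0)
  have hf' {y : ℝ} (hy : y ∈ Ioi 0) := hf.hasDerivAt_deriv_deriv isOpen_Ioi hy
  rw [convexOn_iff_forall_convexOn_line_s5 hU]
  refine forall₂_congr fun x hx => forall₂_congr fun y hy => ?_
  have hz {t : ℝ} (ht : t ∈ Icc (0 : ℝ) 1) := hU.add_smul_sub_mem hx hy ht
  refine convexOn_Icc_iff_forall_nonneg zero_lt_one
    (fun t ht => hasDerivAt_jensenCombo_line (hf' (hz ht).1).1 (hf' (hz ht).2).1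
      (hf' (mem_Ioi_combo hα0 hα1 (hz ht))).1)
    (fun t ht => (hasDerivAt_jensenCombo_line (hf' (hz ht).1).2 (hf' (hz ht).2).2
      (hf' (mem_Ioi_combo hα0 hα1 (hz ht))).2).congr_deriv ?_)
  simp only [jensenCombo, jensenHessian]
  ring

lemma sq_mul_le_of_inv_combo_le {a b c α : ℝ} (ha : 0 < a) (hb : 0 < b) (hc : 0 < c)
    (hα0 : 0 ≤ α) (hα1 : α ≤ 1) (h : α * (1 / a) + (1 - α) * (1 / b) ≤ 1 / c) (u v : ℝ) :
    (α * u + (1 - α) * v) ^ 2 * c ≤ α * u ^ 2 * a + (1 - α) * v ^ 2 * b := by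
  set S := α * u ^ 2 * a + (1 - α) * v ^ 2 * b
  have hcs : (α * u + (1 - α) * v) ^ 2 ≤ S * (α * (1 / a) + (1 - α) * (1 / b)) := by
    have : S * (α * (1 / a) + (1 - α) * (1 / b)) - (α * u + (1 - α) * v) ^ 2
        = α * (1 - α) * (u * a - v * b) ^ 2 / (a * b) := by
      field_simp; ring
    have : 0 ≤ α * (1 - α) * (u * a - v * b) ^ 2 / (a * b) := by
      have := sub_nonneg.2 hα1; positivity
    linarith
  calc (α * u + (1 - α) * v) ^ 2 * c ≤ S * (1 / c) * c := by gcongr; exact hcs.trans (by gcongr)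
    _ = S := by field_simp

lemma inv_combo_le_of_sq_mul_le {a b c α : ℝ} (ha : 0 < a) (hb : 0 < b) (hc : 0 < c)
    (hα0 : 0 ≤ α) (hα1 : α ≤ 1)
    (h : (α * (1 / a) + (1 - α) * (1 / b)) ^ 2 * c ≤
      α * (1 / a) ^ 2 * a + (1 - α) * (1 / b) ^ 2 * b) :
    α * (1 / a) + (1 - α) * (1 / b) ≤ 1 / c := by
  set w := α * (1 / a) + (1 - α) * (1 / b)
  have hw : 0 < w := by
    rcases hα0.eq_or_lt with rfl | hα
    · simp [w, hb]
    · have := sub_nonneg.2 hα1; positivity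
  have hrhs : α * (1 / a) ^ 2 * a + (1 - α) * (1 / b) ^ 2 * b = w := by simp only [w]; field_simp
  rw [hrhs] at h
  rw [le_div_iff₀ hc]
  nlinarith

lemma jensenHessian_nonneg {g : ℝ → ℝ} {α : ℝ} (hg : ∀ y ∈ Ioi (0 : ℝ), 0 < g y)
    (hconc : ConcaveOn ℝ (Ioi 0) fun y => 1 / g y) (hα0 : 0 ≤ α) (hα1 : α ≤ 1) {z : ℝ × ℝ}
    (hz : z ∈ Ioi (0 : ℝ) ×ˢ Ioi (0 : ℝ)) (d : ℝ × ℝ) : 0 ≤ jensenHessian g α z d :=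
  sub_nonneg.2 <| sq_mul_le_of_inv_combo_le (hg _ hz.1) (hg _ hz.2)
    (hg _ (mem_Ioi_combo hα0 hα1 hz)) hα0 hα1
    (hconc.2 hz.1 hz.2 hα0 (sub_nonneg.2 hα1) (add_sub_cancel α 1)) d.1 d.2

/-- Burbea–Rao: For `f` twice continuously differentiable on `(0,∞)` with
`f'' > 0` there and `0 < α < 1`, the Jensen α-divergence
`(p,q) ↦ α f p + (1-α) f q - f (αp + (1-α)q)` is jointly convex on the open positive
quadrant iff `x ↦ 1 / f'' x` is concave on `(0,∞)`. -/
theorem statement5 (f : ℝ → ℝ) (hf : ContDiffOn ℝ 2 f (Set.Ioi 0))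
    (hf'' : ∀ x ∈ Set.Ioi (0 : ℝ), 0 < deriv (deriv f) x)
    (α : ℝ) (hα0 : 0 < α) (hα1 : α < 1) :
    ConvexOn ℝ {x : ℝ × ℝ | 0 < x.1 ∧ 0 < x.2}
        (fun x => α * f x.1 + (1 - α) * f x.2 - f (α * x.1 + (1 - α) * x.2)) ↔
      ConcaveOn ℝ (Set.Ioi 0) (fun x => 1 / deriv (deriv f) x) := by
  have hJ : (fun x : ℝ × ℝ => α * f x.1 + (1 - α) * f x.2 - f (α * x.1 + (1 - α) * x.2))
      = jensenCombo α (1 - α) 1 α f := by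
    funext x; simp only [jensenCombo, one_mul]
  have hU : {x : ℝ × ℝ | 0 < x.1 ∧ 0 < x.2} = Ioi (0 : ℝ) ×ˢ Ioi (0 : ℝ) := rfl
  rw [hJ, hU, convexOn_jensenCombo_iff hf hα0.le hα1.le]
  constructor
  · intro hHess
    refine (continuousOn_const.div (hf.continuousOn_deriv_deriv isOpen_Ioi)
      fun x hx => (hf'' x hx).ne').concaveOn_of_fixed_weight (convex_Ioi 0) hα0 hα1
      fun p hp q hq => ?_
    -- the Hessian is tested in the direction where Cauchy–Schwarz is sharp
    have hdir := hHess (p, q) ⟨hp, hq⟩ (p + 1 / deriv (deriv f) p, q + 1 / deriv (deriv f) q)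
      ⟨add_pos hp (one_div_pos.2 (hf'' p hp)), add_pos hq (one_div_pos.2 (hf'' q hq))⟩
      0 (left_mem_Icc.2 zero_le_one)
    simp only [zero_smul, add_zero, Prod.mk_sub_mk, add_sub_cancel_left, jensenHessian] at hdir
    exact inv_combo_le_of_sq_mul_le (hf'' p hp) (hf'' q hq)
      (hf'' _ (mem_Ioi_combo (z := (p, q)) hα0.le hα1.le ⟨hp, hq⟩)) hα0.le hα1.le
      (sub_nonneg.1 hdir)
  · exact fun hconc x hx y hy t ht => jensenHessian_nonneg hf'' hconc hα0.le hα1.le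
      (((convex_Ioi 0).prod (convex_Ioi 0)).add_smul_sub_mem hx hy ht) _
end

section
/- Let n ≥ 1, let p ∈ ℝⁿ be fixed, and for each index i let dᵢ : (0,∞) → ℝ be differentiable. Let K : (0,∞)ⁿ → (0,∞) be differentiable and suppose that K is a 'nominal invariance factor', i.e. for every q ∈ (0,∞)ⁿ the stationarity condition Σᵢ qᵢ · dᵢ'(K(q)·qᵢ) = 0 holds. Then the invariant divergence DI(q) = Σᵢ dᵢ(K(q)·qᵢ) satisfies the fundamental property Σⱼ qⱼ · (∂DI/∂qⱼ)(q) = 0 for every q ∈ (0,∞)ⁿ. -/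
/-! The sum `∑ⱼ qⱼ ∂DI/∂qⱼ` is the derivative of `DI` at `q` in the direction `q` itself. By the
chain rule this equals `∑ᵢ dᵢ'(K q · qᵢ) · (K q · qᵢ + (DK q q) · qᵢ)
= (K q + DK q q) · ∑ᵢ qᵢ dᵢ'(K q · qᵢ)`, which vanishes by stationarity. -/

open Finset

variable {ι : Type*} [Fintype ι]

theorem ContinuousLinearMap.sum_mul_apply_single_eq_apply [DecidableEq ι]
    (L : (ι → ℝ) →L[ℝ] ℝ) (q : ι → ℝ) :
    ∑ j, q j * L (Pi.single j 1) = L q := by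
  conv_rhs => rw [← univ_sum_single q]
  simp only [map_sum]
  refine sum_congr rfl fun j _ => ?_
  rw [← smul_eq_mul, ← map_smul, ← Pi.single_smul', smul_eq_mul, mul_one]

theorem hasFDerivAt_sum_comp_mul_apply {d : ι → ℝ → ℝ} {K : (ι → ℝ) → ℝ}
    {L : (ι → ℝ) →L[ℝ] ℝ} {q : ι → ℝ} (hK : HasFDerivAt K L q)
    (hd : ∀ i, DifferentiableAt ℝ (d i) (K q * q i)) :
    HasFDerivAt (fun q' => ∑ i, d i (K q' * q' i))
      (∑ i, deriv (d i) (K q * q i) • (K q • ContinuousLinearMap.proj i + q i • L)) q :=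
  HasFDerivAt.fun_sum fun i _ =>
    (hd i).hasDerivAt.comp_hasFDerivAt q (hK.mul (hasFDerivAt_apply i q))

theorem fderiv_sum_comp_mul_apply_self {d : ι → ℝ → ℝ} {K : (ι → ℝ) → ℝ} {q : ι → ℝ}
    (hK : DifferentiableAt ℝ K q) (hd : ∀ i, DifferentiableAt ℝ (d i) (K q * q i)) :
    fderiv ℝ (fun q' => ∑ i, d i (K q' * q' i)) q q
      = (K q + fderiv ℝ K q q) * ∑ i, q i * deriv (d i) (K q * q i) := by
  rw [(hasFDerivAt_sum_comp_mul_apply hK.hasFDerivAt hd).fderiv, mul_sum]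
  simp only [FunLike.coe_sum, Finset.sum_apply, FunLike.coe_smul,
    FunLike.coe_add, Pi.smul_apply, Pi.add_apply, ContinuousLinearMap.proj_apply,
    smul_eq_mul]
  exact sum_congr rfl fun i _ => by ring

theorem statement9_general (n : ℕ) (d : Fin n → ℝ → ℝ)
    (hd : ∀ i, ∀ t > (0 : ℝ), DifferentiableAt ℝ (d i) t)
    (K : (Fin n → ℝ) → ℝ)
    (hKpos : ∀ q : Fin n → ℝ, (∀ i, 0 < q i) → 0 < K q)
    (hKdiff : ∀ q : Fin n → ℝ, (∀ i, 0 < q i) → DifferentiableAt ℝ K q)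
    (hstat : ∀ q : Fin n → ℝ, (∀ i, 0 < q i) →
      ∑ i, q i * deriv (d i) (K q * q i) = 0) :
    ∀ q : Fin n → ℝ, (∀ i, 0 < q i) →
      ∑ j, q j *
        fderiv ℝ (fun q' => ∑ i, d i (K q' * q' i)) q (Pi.single j 1) = 0 := by
  intro q hq
  have hd_at : ∀ i, DifferentiableAt ℝ (d i) (K q * q i) := fun i =>
    hd i _ (mul_pos (hKpos q hq) (hq i))
  rw [ContinuousLinearMap.sum_mul_apply_single_eq_apply,
    fderiv_sum_comp_mul_apply_self (hKdiff q hq) hd_at, hstat q hq, mul_zero]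

/-- If `K` is a nominal invariance factor, i.e. for every positive `q` the
stationarity condition `∑ i, q i * dᵢ'(K q * q i) = 0` holds, then the invariant
divergence `DI q = ∑ i, dᵢ (K q * q i)` satisfies the fundamental property
`∑ j, q j * ∂DI/∂qⱼ = 0` on positive vectors. -/
theorem statement9 (n : ℕ) (hn : 1 ≤ n) (p : Fin n → ℝ) (d : Fin n → ℝ → ℝ)
    (hd : ∀ i, ∀ t > (0 : ℝ), DifferentiableAt ℝ (d i) t)
    (K : (Fin n → ℝ) → ℝ)
    (hKpos : ∀ q : Fin n → ℝ, (∀ i, 0 < q i) → 0 < K q)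
    (hKdiff : ∀ q : Fin n → ℝ, (∀ i, 0 < q i) → DifferentiableAt ℝ K q)
    (hstat : ∀ q : Fin n → ℝ, (∀ i, 0 < q i) →
      ∑ i, q i * deriv (d i) (K q * q i) = 0) :
    ∀ q : Fin n → ℝ, (∀ i, 0 < q i) →
      ∑ j, q j *
        fderiv ℝ (fun q' => ∑ i, d i (K q' * q' i)) q (Pi.single j 1) = 0 :=
  statement9_general n d hd K hKpos hKdiff hstat
end

section
/- Let n ≥ 1 and let K : (0,∞)ⁿ → (0,∞) be differentiable and satisfy the Euler differential equation K(q) + Σⱼ qⱼ · (∂K/∂qⱼ)(q) = 0 for all q ∈ (0,∞)ⁿ. Then for ANY family of differentiable functions dᵢ : (0,∞) → ℝ (i = 1,…,n), the function DI(q) = Σᵢ dᵢ(K(q)·qᵢ) satisfies Σⱼ qⱼ · (∂DI/∂qⱼ)(q) = 0 for every q ∈ (0,∞)ⁿ. -/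
/-!
The operator `∑ j, q j * ∂/∂qⱼ` is the derivative along the radial direction `q`. Euler's equation
says exactly that the map `q ↦ K q • q` has zero derivative along `q`, since that derivative is
`(K q + ∂_q K) • q`. As `DI = Φ ∘ (q ↦ K q • q)` with `Φ w = ∑ i, dᵢ (w i)`, the chain rule
makes the radial derivative of `DI` vanish, whatever the `dᵢ` are.
-/

theorem ContinuousLinearMap.sum_mul_apply_single {R ι : Type*} [CommSemiring R]
    [TopologicalSpace R] [Fintype ι] [DecidableEq ι] (L : (ι → R) →L[R] R) (q : ι → R) :
    ∑ j, q j * L (Pi.single j 1) = L q := by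
  conv_rhs => rw [← Finset.univ_sum_single q]
  simp only [map_sum]
  refine Finset.sum_congr rfl fun j _ => ?_
  rw [← smul_eq_mul, ← map_smul, ← Pi.single_smul', smul_eq_mul, mul_one]

section Calculus

variable {𝕜 E F G : Type*} [NontriviallyNormedField 𝕜]
  [NormedAddCommGroup E] [NormedSpace 𝕜 E] [NormedAddCommGroup F] [NormedSpace 𝕜 F]
  [NormedAddCommGroup G] [NormedSpace 𝕜 G]

theorem HasFDerivAt.smul_self {K : E → 𝕜} {K' : E →L[𝕜] 𝕜} {x : E} (hK : HasFDerivAt K K' x) :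
    HasFDerivAt (fun y => K y • y) (K x • ContinuousLinearMap.id 𝕜 E + K'.smulRight x) x :=
  hK.smul (hasFDerivAt_id x)

theorem fderiv_comp_apply_eq_zero {g : F → G} {f : E → F} {f' : E →L[𝕜] F} {x v : E}
    (hg : DifferentiableAt 𝕜 g (f x)) (hf : HasFDerivAt f f' x) (hv : f' v = 0) :
    fderiv 𝕜 (g ∘ f) x v = 0 := by
  rw [fderiv_comp x hg hf.differentiableAt, hf.fderiv, ContinuousLinearMap.comp_apply, hv,
    map_zero]

theorem differentiableAt_sum_apply {ι : Type*} [Fintype ι] {d : ι → 𝕜 → F} {v : ι → 𝕜}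
    (hd : ∀ i, DifferentiableAt 𝕜 (d i) (v i)) :
    DifferentiableAt 𝕜 (fun w : ι → 𝕜 => ∑ i, d i (w i)) v :=
  DifferentiableAt.fun_sum fun i _ => (hd i).comp v (differentiableAt_apply i v)

end Calculus

theorem statement10_general (n : ℕ) (K : (Fin n → ℝ) → ℝ)
    (hKpos : ∀ q : Fin n → ℝ, (∀ i, 0 < q i) → 0 < K q)
    (hKdiff : ∀ q : Fin n → ℝ, (∀ i, 0 < q i) → DifferentiableAt ℝ K q)
    (hEuler : ∀ q : Fin n → ℝ, (∀ i, 0 < q i) →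
      K q + ∑ j, q j * fderiv ℝ K q (Pi.single j 1) = 0)
    (d : Fin n → ℝ → ℝ)
    (hd : ∀ i, ∀ t > (0 : ℝ), DifferentiableAt ℝ (d i) t) :
    ∀ q : Fin n → ℝ, (∀ i, 0 < q i) →
      ∑ j, q j *
        fderiv ℝ (fun q' => ∑ i, d i (K q' * q' i)) q (Pi.single j 1) = 0 := by
  intro q hq
  have hEuler_radial : K q + fderiv ℝ K q q = 0 := by
    simpa only [ContinuousLinearMap.sum_mul_apply_single] using hEuler q hq
  have hscale : HasFDerivAt (fun y => K y • y)
      (K q • ContinuousLinearMap.id ℝ _ + (fderiv ℝ K q).smulRight q) q :=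
    (hKdiff q hq).hasFDerivAt.smul_self
  have hΦ : DifferentiableAt ℝ (fun w : Fin n → ℝ => ∑ i, d i (w i)) (K q • q) :=
    differentiableAt_sum_apply fun i => hd i _ (mul_pos (hKpos q hq) (hq i))
  rw [ContinuousLinearMap.sum_mul_apply_single]
  change fderiv ℝ ((fun w : Fin n → ℝ => ∑ i, d i (w i)) ∘ fun y => K y • y) q q = 0
  refine fderiv_comp_apply_eq_zero hΦ hscale ?_
  simp only [add_apply, smul_apply, ContinuousLinearMap.id_apply,
    ContinuousLinearMap.smulRight_apply, ← add_smul, hEuler_radial, zero_smul]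

/-- Any positive differentiable `K` solving the Euler differential equation
`K q + ∑ j, q j * ∂K/∂qⱼ = 0` makes ANY divergence invariant: for every family of
differentiable `dᵢ`, the function `DI q = ∑ i, dᵢ (K q * q i)` satisfies
`∑ j, q j * ∂DI/∂qⱼ = 0` on positive vectors. -/
theorem statement10 (n : ℕ) (hn : 1 ≤ n) (K : (Fin n → ℝ) → ℝ)
    (hKpos : ∀ q : Fin n → ℝ, (∀ i, 0 < q i) → 0 < K q)
    (hKdiff : ∀ q : Fin n → ℝ, (∀ i, 0 < q i) → DifferentiableAt ℝ K q)
    (hEuler : ∀ q : Fin n → ℝ, (∀ i, 0 < q i) →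
      K q + ∑ j, q j * fderiv ℝ K q (Pi.single j 1) = 0)
    (d : Fin n → ℝ → ℝ)
    (hd : ∀ i, ∀ t > (0 : ℝ), DifferentiableAt ℝ (d i) t) :
    ∀ q : Fin n → ℝ, (∀ i, 0 < q i) →
      ∑ j, q j *
        fderiv ℝ (fun q' => ∑ i, d i (K q' * q' i)) q (Pi.single j 1) = 0 :=
  statement10_general n K hKpos hKdiff hEuler d hd
end

section
/- Let p, q ∈ ℝⁿ have strictly positive entries. The function K ↦ KL(K·q‖p) = Σᵢ [ K qᵢ·log( K qᵢ/pᵢ ) + pᵢ − K qᵢ ] on (0,∞) is strictly convex and attains its unique global minimum at K₀ = exp( Σᵢ wᵢ·log(pᵢ/qᵢ) ) with weights wᵢ = qᵢ/(Σⱼ qⱼ); i.e. the nominal invariance factor of the dual Kullback–Leibler divergence is the weighted geometric mean of the ratios pᵢ/qᵢ with weights wᵢ. -/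
/-- The weighted geometric mean of the ratios `p i / q i` with weights `q i / ∑ q`. -/
noncomputable def dualKLK0 {n : ℕ} (p q : Fin n → ℝ) : ℝ :=
  Real.exp (∑ i, (q i / ∑ j, q j) * Real.log (p i / q i))

/-- `K ↦ KL(K q‖p)` is strictly convex on `(0,∞)` and attains its unique
global minimum at the weighted geometric mean `K₀ = exp(∑ wᵢ log(pᵢ/qᵢ))`,
`wᵢ = qᵢ/∑ q`, the nominal invariance factor of the dual Kullback–Leibler divergence. -/
theorem statement13 {n : ℕ} (hn : 0 < n) (p q : Fin n → ℝ)
    (hp : ∀ i, 0 < p i) (hq : ∀ i, 0 < q i) :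
    StrictConvexOn ℝ (Set.Ioi 0)
        (fun K => ∑ i, (K * q i * Real.log (K * q i / p i) + p i - K * q i)) ∧
      0 < dualKLK0 p q ∧
      ∀ K ∈ Set.Ioi (0 : ℝ), K ≠ dualKLK0 p q →
        (∑ i, (dualKLK0 p q * q i * Real.log (dualKLK0 p q * q i / p i) +
            p i - dualKLK0 p q * q i)) <
          ∑ i, (K * q i * Real.log (K * q i / p i) + p i - K * q i) := by
  have hne : (Finset.univ : Finset (Fin n)).Nonempty :=
    Finset.univ_nonempty_iff.mpr (Fin.pos_iff_nonempty.mp hn)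
  set Q := ∑ j, q j with hQdef
  have hQ : 0 < Q := Finset.sum_pos (fun i _ => hq i) hne
  set c := ∑ i, q i * Real.log (q i / p i) with hcdef
  set P := ∑ i, p i with hPdef
  -- pointwise formula for the sum
  have key : ∀ K : ℝ, 0 < K →
      (∑ i, (K * q i * Real.log (K * q i / p i) + p i - K * q i))
      = Q * (K * Real.log K) + c * K + (P - Q * K) := by
    intro K hK
    have hterm : ∀ i, K * q i * Real.log (K * q i / p i) + p i - K * q i
        = (q i * (K * Real.log K) + (q i * Real.log (q i / p i)) * K) + (p i - q i * K) := by
      intro i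
      have h1 : K * q i / p i = K * (q i / p i) := by ring
      have h2 : Real.log (K * (q i / p i)) = Real.log K + Real.log (q i / p i) :=
        Real.log_mul hK.ne' (div_pos (hq i) (hp i)).ne'
      rw [h1, h2]; ring
    simp_rw [hterm]
    rw [Finset.sum_add_distrib, Finset.sum_add_distrib, Finset.sum_sub_distrib,
        ← Finset.sum_mul, ← Finset.sum_mul, ← Finset.sum_mul]
    try ring
  -- strict convexity of the model function
  have hsmul : StrictConvexOn ℝ (Set.Ioi 0) (fun x : ℝ => Q * (x * Real.log x)) := by
    obtain ⟨hs, hineq⟩ :=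
      Real.strictConvexOn_mul_log.subset (Set.Ioi_subset_Ici le_rfl) (convex_Ioi 0)
    refine ⟨hs, fun x hx y hy hxy a b ha hb hab => ?_⟩
    have h := hineq hx hy hxy ha hb hab
    simp only [smul_eq_mul] at *
    nlinarith [mul_lt_mul_of_pos_left h hQ]
  have haff : ConvexOn ℝ (Set.Ioi 0) (fun K : ℝ => c * K + (P - Q * K)) := by
    refine ⟨convex_Ioi 0, fun x _ y _ a b ha hb hab => ?_⟩
    simp only [smul_eq_mul]
    have : c * (a * x + b * y) + (P - Q * (a * x + b * y))
        = a * (c * x + (P - Q * x)) + b * (c * y + (P - Q * y)) := by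
      linear_combination (-P) * hab
    linarith [this.le]
  have hmodel : StrictConvexOn ℝ (Set.Ioi 0)
      (fun K : ℝ => Q * (K * Real.log K) + (c * K + (P - Q * K))) :=
    hsmul.add_convexOn haff
  have hconv : StrictConvexOn ℝ (Set.Ioi 0)
      (fun K => ∑ i, (K * q i * Real.log (K * q i / p i) + p i - K * q i)) := by
    obtain ⟨hs, hineq⟩ := hmodel
    refine ⟨hs, fun x hx y hy hxy a b ha hb hab => ?_⟩
    have hx' : (0 : ℝ) < x := hx
    have hy' : (0 : ℝ) < y := hy
    have hcomb : (0 : ℝ) < a * x + b * y := by positivity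
    have h := hineq hx hy hxy ha hb hab
    simp only [smul_eq_mul] at *
    rw [key x hx', key y hy', key _ hcomb]
    calc Q * ((a * x + b * y) * Real.log (a * x + b * y)) + c * (a * x + b * y)
          + (P - Q * (a * x + b * y))
        < (a * (Q * (x * Real.log x) + (c * x + (P - Q * x)))
          + b * (Q * (y * Real.log y) + (c * y + (P - Q * y)))) := by linarith
      _ = a * (Q * (x * Real.log x) + c * x + (P - Q * x))
          + b * (Q * (y * Real.log y) + c * y + (P - Q * y)) := by ring
  refine ⟨hconv, Real.exp_pos _, ?_⟩
  set K0 := dualKLK0 p q with hK0def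
  have hK0 : 0 < K0 := Real.exp_pos _
  have hlogK0 : Q * Real.log K0 = -c := by
    rw [hK0def, dualKLK0, Real.log_exp]
    have h1 : ∀ i, Real.log (p i / q i) = -Real.log (q i / p i) := by
      intro i; rw [← Real.log_inv, inv_div]
    have h2 : ∑ i, q i / Q * Real.log (p i / q i) = (-c) / Q := by
      rw [hcdef, ← Finset.sum_neg_distrib, Finset.sum_div]
      refine Finset.sum_congr rfl fun i _ => ?_
      rw [h1 i]; ring
    rw [h2]
    field_simp
    try ring
  intro K hK hKne
  have hK' : (0 : ℝ) < K := hK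
  have hc : c = -(Q * Real.log K0) := by linarith [hlogK0]
  have hfact : 0 < K * (Real.log K - Real.log K0) + K0 - K := by
    have hx : 0 < K0 / K := div_pos hK0 hK'
    have hx1 : K0 / K ≠ 1 := fun h => hKne ((div_eq_one_iff_eq hK'.ne').mp h).symm
    have hlt := Real.log_lt_sub_one_of_pos hx hx1
    rw [Real.log_div hK0.ne' hK'.ne'] at hlt
    have h3 : K * (Real.log K0 - Real.log K) < K * (K0 / K - 1) :=
      (mul_lt_mul_iff_right₀ hK').mpr hlt
    have h4 : K * (K0 / K - 1) = K0 - K := by field_simp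
    nlinarith
  rw [key K hK', key K0 hK0]
  have h2 : Q * (K * Real.log K) + c * K + (P - Q * K)
      - (Q * (K0 * Real.log K0) + c * K0 + (P - Q * K0))
      = Q * (K * (Real.log K - Real.log K0) + K0 - K) := by
    rw [hc]; ring
  nlinarith [mul_pos hQ hfact]
end

section
/- Let λ ∈ ℝ with λ ≠ 0 and λ ≠ 1, and let p, q ∈ ℝⁿ have strictly positive entries. The function K ↦ B_λ(p‖K·q) = (1/(λ(λ−1)))·Σᵢ [ pᵢ^λ − λ pᵢ (K qᵢ)^{λ−1} − (1−λ)(K qᵢ)^λ ] on (0,∞) attains its unique global minimum at K₀ = (Σᵢ pᵢ qᵢ^{λ−1}) / (Σᵢ qᵢ^λ), the nominal invariance factor of the Beta divergence. -/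
/-!
With `x = K₀ / K`, the identity `∑ pᵢ qᵢ^{λ-1} = K₀ ∑ qᵢ^λ` and homogeneity of `rpow` give
`B_λ(p‖K·q) - B_λ(p‖K₀·q) = (∑ qᵢ^λ) · K^λ · (x^λ - 1 - λ(x - 1)) / (λ(λ - 1))`.
By Bernoulli's inequality the numerator `x^λ - 1 - λ(x - 1)` has, for `x ≠ 1`, the sign of
`λ(λ - 1)`: it is negative for `0 < λ < 1` and positive otherwise.
-/

/-- The Beta divergence `B_λ(p‖K·q)` as a function of the scale factor `K`. -/
noncomputable def betaDivK {n : ℕ} (lam : ℝ) (p q : Fin n → ℝ) (K : ℝ) : ℝ :=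
  (1 / (lam * (lam - 1))) *
    ∑ i, (p i ^ lam - lam * p i * (K * q i) ^ (lam - 1) - (1 - lam) * (K * q i) ^ lam)

/-- The nominal invariance factor of the Beta divergence. -/
noncomputable def betaK0 {n : ℕ} (lam : ℝ) (p q : Fin n → ℝ) : ℝ :=
  (∑ i, p i * q i ^ (lam - 1)) / ∑ i, q i ^ lam

open Real Finset

section Bernoulli

variable {x r : ℝ}

lemma one_add_mul_sub_one_lt_rpow_of_one_lt (hx : 0 < x) (hx1 : x ≠ 1) (hr : 1 < r) :
    1 + r * (x - 1) < x ^ r := by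
  simpa using one_add_mul_self_lt_rpow_one_add (s := x - 1) (by linarith) (sub_ne_zero.2 hx1) hr

lemma rpow_lt_one_add_mul_sub_one (hx : 0 < x) (hx1 : x ≠ 1) (hr0 : 0 < r) (hr1 : r < 1) :
    x ^ r < 1 + r * (x - 1) := by
  simpa using rpow_one_add_lt_one_add_mul_self (s := x - 1) (by linarith) (sub_ne_zero.2 hx1) hr0 hr1

lemma one_add_mul_sub_one_lt_rpow_of_neg (hx : 0 < x) (hx1 : x ≠ 1) (hr : r < 0) :
    1 + r * (x - 1) < x ^ r := by
  -- the gap `x ^ r - (1 + r (x - 1))` equals `x` times the gap at `x⁻¹` with exponent `1 - r > 1`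
  have hgap := one_add_mul_sub_one_lt_rpow_of_one_lt (inv_pos.2 hx) (inv_ne_one.2 hx1)
    (show 1 < 1 - r by linarith)
  have hrefl : x * x⁻¹ ^ (1 - r) = x ^ r := by
    rw [inv_rpow hx.le, ← rpow_neg hx.le, ← rpow_one_add' hx.le (by linarith)]
    ring_nf
  have hlin : x * (1 + (1 - r) * (x⁻¹ - 1)) = 1 + r * (x - 1) := by
    field_simp
    ring
  rw [← hrefl, ← hlin]
  exact mul_lt_mul_of_pos_left hgap hx

lemma rpow_sub_one_add_mul_sub_one_div_pos (hx : 0 < x) (hx1 : x ≠ 1) (hr0 : r ≠ 0)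
    (hr1 : r ≠ 1) : 0 < (x ^ r - (1 + r * (x - 1))) / (r * (r - 1)) := by
  rcases lt_trichotomy r 0 with hr | hr | hr
  · have := one_add_mul_sub_one_lt_rpow_of_neg hx hx1 hr
    exact div_pos (by linarith) (mul_pos_of_neg_of_neg hr (by linarith))
  · exact absurd hr hr0
  rcases lt_or_gt_of_ne hr1 with hr' | hr'
  · have := rpow_lt_one_add_mul_sub_one hx hx1 hr hr'
    exact div_pos_of_neg_of_neg (by linarith) (mul_neg_of_pos_of_neg hr (by linarith))
  · have := one_add_mul_sub_one_lt_rpow_of_one_lt hx hx1 hr'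
    exact div_pos (by linarith) (mul_pos hr (by linarith))

end Bernoulli

section BetaDivergence

variable {n : ℕ} (lam : ℝ) {p q : Fin n → ℝ}

lemma betaDivK_eq (hq : ∀ i, 0 ≤ q i) {K : ℝ} (hK : 0 ≤ K) :
    betaDivK lam p q K = (1 / (lam * (lam - 1))) * (∑ i, p i ^ lam
      - lam * (∑ i, p i * q i ^ (lam - 1)) * K ^ (lam - 1)
      - (1 - lam) * (∑ i, q i ^ lam) * K ^ lam) := by
  have hterm (i : Fin n) :
      p i ^ lam - lam * p i * (K * q i) ^ (lam - 1) - (1 - lam) * (K * q i) ^ lam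
        = p i ^ lam - lam * (p i * q i ^ (lam - 1)) * K ^ (lam - 1)
          - (1 - lam) * q i ^ lam * K ^ lam := by
    rw [mul_rpow hK (hq i), mul_rpow hK (hq i)]
    ring
  simp only [betaDivK, hterm, sum_sub_distrib, ← sum_mul, ← mul_sum]

lemma sum_rpow_pos (hn : 0 < n) (hq : ∀ i, 0 < q i) : 0 < ∑ i, q i ^ lam :=
  have : Nonempty (Fin n) := ⟨⟨0, hn⟩⟩
  sum_pos (fun i _ => rpow_pos_of_pos (hq i) _) univ_nonempty

lemma betaK0_pos (hn : 0 < n) (hp : ∀ i, 0 < p i) (hq : ∀ i, 0 < q i) :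
    0 < betaK0 lam p q :=
  have : Nonempty (Fin n) := ⟨⟨0, hn⟩⟩
  div_pos (sum_pos (fun i _ => mul_pos (hp i) (rpow_pos_of_pos (hq i) _)) univ_nonempty)
    (sum_rpow_pos lam hn hq)

lemma betaDivK_sub_betaDivK_betaK0 (hn : 0 < n) (hp : ∀ i, 0 < p i) (hq : ∀ i, 0 < q i)
    {K : ℝ} (hK : 0 < K) :
    betaDivK lam p q K - betaDivK lam p q (betaK0 lam p q) =
      (∑ i, q i ^ lam) * K ^ lam *
        (((betaK0 lam p q / K) ^ lam - (1 + lam * (betaK0 lam p q / K - 1))) /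
          (lam * (lam - 1))) := by
  have hK₀ := betaK0_pos lam hn hp hq
  have hB := sum_rpow_pos lam hn hq
  have hA : ∑ i, p i * q i ^ (lam - 1) = betaK0 lam p q * ∑ i, q i ^ lam :=
    (div_mul_cancel₀ _ hB.ne').symm
  set x := betaK0 lam p q / K
  have hK₀x : betaK0 lam p q = x * K := (div_mul_cancel₀ _ hK.ne').symm
  have hx0 : 0 < x := div_pos hK₀ hK
  rw [betaDivK_eq lam (fun i => (hq i).le) hK.le, betaDivK_eq lam (fun i => (hq i).le) hK₀.le,
    hA, rpow_sub_one hK.ne', rpow_sub_one hK₀.ne', hK₀x, mul_rpow hx0.le hK.le]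
  field_simp
  ring

end BetaDivergence

/-- for `λ ∉ {0,1}` and positive vectors `p, q`, the function
`K ↦ B_λ(p‖K·q)` on `(0,∞)` attains its unique global minimum at
`K₀ = (∑ pᵢ qᵢ^{λ-1})/(∑ qᵢ^λ)`. -/
theorem statement15 {n : ℕ} (hn : 0 < n) (lam : ℝ) (hl0 : lam ≠ 0) (hl1 : lam ≠ 1)
    (p q : Fin n → ℝ) (hp : ∀ i, 0 < p i) (hq : ∀ i, 0 < q i) :
    0 < betaK0 lam p q ∧
    ∀ K ∈ Set.Ioi (0 : ℝ), K ≠ betaK0 lam p q →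
      betaDivK lam p q (betaK0 lam p q) < betaDivK lam p q K := by
  have hK₀ := betaK0_pos lam hn hp hq
  refine ⟨hK₀, fun K (hK : 0 < K) hKK₀ => sub_pos.1 ?_⟩
  have hx1 : betaK0 lam p q / K ≠ 1 := fun h => hKK₀ ((div_eq_one_iff_eq hK.ne').1 h).symm
  have hgap := rpow_sub_one_add_mul_sub_one_div_pos (div_pos hK₀ hK) hx1 hl0 hl1
  rw [betaDivK_sub_betaDivK_betaK0 lam hn hp hq hK]
  exact mul_pos (mul_pos (sum_rpow_pos lam hn hq) (rpow_pos_of_pos hK _)) hgap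
end

section
/- Let λ ∈ ℝ with λ ≠ 0 and λ ≠ 1, let p, q ∈ ℝⁿ have strictly positive entries, and set K₀ = ( (Σᵢ pᵢ^λ qᵢ^{1−λ}) / (Σᵢ qᵢ) )^{1/λ}. Then the Alpha divergence satisfies the exact identity A_λ(p‖q) − A_λ(p‖K₀·q) = (Σᵢ qᵢ) · ( K₀^λ − λ·K₀ + λ − 1 ) / ( λ(λ−1) ), and this quantity is ≥ 0; in particular A_λ(p‖K₀·q) ≤ A_λ(p‖q), with equality when pᵢ = qᵢ for all i (then K₀ = 1). -/
/-- The Alpha divergence between positive vectors. -/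
noncomputable def alphaDiv {n : ℕ} (lam : ℝ) (p q : Fin n → ℝ) : ℝ :=
  (1 / (lam * (lam - 1))) *
    ∑ i, (p i ^ lam * q i ^ (1 - lam) - lam * p i - (1 - lam) * q i)

/-- The nominal invariance factor of the Alpha divergence. -/
noncomputable def alphaK0 {n : ℕ} (lam : ℝ) (p q : Fin n → ℝ) : ℝ :=
  ((∑ i, p i ^ lam * q i ^ (1 - lam)) / ∑ i, q i) ^ (1 / lam)

/-- Bernoulli-type inequality: for `K > 0` and `lam ∉ {0,1}`,
`0 ≤ (K^lam - lam*K + lam - 1)/(lam*(lam-1))`. -/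
lemma bernoulli_aux (lam : ℝ) (hl0 : lam ≠ 0) (hl1 : lam ≠ 1) {K : ℝ} (hK : 0 < K) :
    0 ≤ (K ^ lam - lam * K + lam - 1) / (lam * (lam - 1)) := by
  rcases lt_trichotomy lam 0 with h0 | h0 | h0
  · -- lam < 0 : use Bernoulli with exponent 1 - lam ≥ 1 at 1/K
    have hb := one_add_mul_self_le_rpow_one_add
      (s := 1 / K - 1) (p := 1 - lam) (by
        have : 0 < 1 / K := by positivity
        linarith) (by linarith)
    have h1 : (1 : ℝ) + (1 / K - 1) = 1 / K := by ring
    rw [h1] at hb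
    have h2 : (1 / K) ^ (1 - lam) = K ^ lam / K := by
      rw [one_div, Real.inv_rpow hK.le, ← Real.rpow_neg hK.le,
        show -(1 - lam) = lam - 1 by ring, Real.rpow_sub hK, Real.rpow_one]
    rw [h2] at hb
    -- hb : 1 + (1-lam)*(1/K - 1) ≤ K^lam / K
    have hnum : 0 ≤ K ^ lam - lam * K + lam - 1 := by
      have := mul_le_mul_of_nonneg_left hb hK.le
      rw [mul_div_cancel₀ _ hK.ne'] at this
      have hfrac : K * (1 + (1 - lam) * (1 / K - 1)) = K + (1 - lam) * (1 - K) := by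
        field_simp
      rw [hfrac] at this
      nlinarith
    have hden : 0 < lam * (lam - 1) := mul_pos_of_neg_of_neg h0 (by linarith)
    positivity
  · exact absurd h0 hl0
  · rcases lt_trichotomy lam 1 with h1 | h1 | h1
    · -- 0 < lam < 1
      have hb := rpow_one_add_le_one_add_mul_self
        (s := K - 1) (p := lam) (by linarith) h0.le h1.le
      rw [show (1 : ℝ) + (K - 1) = K by ring] at hb
      have hnum : K ^ lam - lam * K + lam - 1 ≤ 0 := by nlinarith
      have hden : lam * (lam - 1) < 0 := mul_neg_of_pos_of_neg h0 (by linarith)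
      have := div_nonneg (neg_nonneg.2 hnum) (neg_nonneg.2 hden.le)
      rwa [neg_div_neg_eq] at this
    · exact absurd h1 hl1
    · have hb := one_add_mul_self_le_rpow_one_add (s := K - 1) (p := lam) (by linarith) h1.le
      rw [show (1 : ℝ) + (K - 1) = K by ring] at hb
      have hnum : 0 ≤ K ^ lam - lam * K + lam - 1 := by nlinarith
      have hden : 0 < lam * (lam - 1) := mul_pos (by linarith) (by linarith)
      positivity

/-- the exact identity
`A_λ(p‖q) - A_λ(p‖K₀ q) = (∑ q) (K₀^λ - λ K₀ + λ - 1)/(λ(λ-1)) ≥ 0`; in particular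
`A_λ(p‖K₀ q) ≤ A_λ(p‖q)`, with equality when `p = q` (and then `K₀ = 1`). -/
theorem statement16 {n : ℕ} (hn : 0 < n) (lam : ℝ) (hl0 : lam ≠ 0) (hl1 : lam ≠ 1)
    (p q : Fin n → ℝ) (hp : ∀ i, 0 < p i) (hq : ∀ i, 0 < q i) :
    alphaDiv lam p q - alphaDiv lam p (fun i => alphaK0 lam p q * q i) =
        (∑ i, q i) * (alphaK0 lam p q ^ lam - lam * alphaK0 lam p q + lam - 1) /
          (lam * (lam - 1)) ∧
      0 ≤ alphaDiv lam p q - alphaDiv lam p (fun i => alphaK0 lam p q * q i) ∧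
      alphaDiv lam p (fun i => alphaK0 lam p q * q i) ≤ alphaDiv lam p q ∧
      ((∀ i, p i = q i) → alphaK0 lam p q = 1 ∧
        alphaDiv lam p q - alphaDiv lam p (fun i => alphaK0 lam p q * q i) = 0) := by
  haveI : Nonempty (Fin n) := Fin.pos_iff_nonempty.mp hn
  have hne : (Finset.univ : Finset (Fin n)).Nonempty := Finset.univ_nonempty
  set S := ∑ i, p i ^ lam * q i ^ (1 - lam) with hSdef
  set Q := ∑ i, q i with hQdef
  set P := ∑ i, p i with hPdef
  have hS : 0 < S := Finset.sum_pos
    (fun i _ => mul_pos (Real.rpow_pos_of_pos (hp i) _) (Real.rpow_pos_of_pos (hq i) _)) hne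
  have hQ : 0 < Q := Finset.sum_pos (fun i _ => hq i) hne
  set K := alphaK0 lam p q with hKdef
  have hK : 0 < K := Real.rpow_pos_of_pos (div_pos hS hQ) _
  have hKlam : K ^ lam = S / Q := by
    rw [hKdef, alphaK0, ← hSdef, ← hQdef, ← Real.rpow_mul (div_pos hS hQ).le,
      one_div_mul_cancel hl0, Real.rpow_one]
  have hKE : K ^ (1 - lam) * K ^ lam = K := by
    rw [← Real.rpow_add hK]
    norm_num
  have hSQ : S = K ^ lam * Q := by
    rw [hKlam, div_mul_cancel₀ _ hQ.ne']
  -- compute the two divergences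
  have hd1 : alphaDiv lam p q = (1 / (lam * (lam - 1))) * (S - lam * P - (1 - lam) * Q) := by
    rw [alphaDiv]
    congr 1
    rw [Finset.sum_sub_distrib, Finset.sum_sub_distrib, ← Finset.mul_sum, ← Finset.mul_sum,
      ← hSdef, ← hPdef, ← hQdef]
  have hd2 : alphaDiv lam p (fun i => K * q i) =
      (1 / (lam * (lam - 1))) * (K ^ (1 - lam) * S - lam * P - (1 - lam) * (K * Q)) := by
    rw [alphaDiv]
    congr 1
    have h1 : ∀ i, p i ^ lam * (K * q i) ^ (1 - lam)
        = K ^ (1 - lam) * (p i ^ lam * q i ^ (1 - lam)) := by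
      intro i
      rw [Real.mul_rpow hK.le (hq i).le]; ring
    simp only [h1]
    rw [Finset.sum_sub_distrib, Finset.sum_sub_distrib, ← Finset.mul_sum, ← Finset.mul_sum,
      ← Finset.mul_sum, ← hSdef, ← hPdef]
    rw [show ∑ i, K * q i = K * Q from by rw [hQdef, Finset.mul_sum]]
  have key : alphaDiv lam p q - alphaDiv lam p (fun i => K * q i) =
      Q * (K ^ lam - lam * K + lam - 1) / (lam * (lam - 1)) := by
    rw [hd1, hd2, hSQ]
    linear_combination (-(Q / (lam * (lam - 1)))) * hKE
  have hnn : 0 ≤ alphaDiv lam p q - alphaDiv lam p (fun i => K * q i) := by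
    rw [key, mul_div_assoc]
    exact mul_nonneg hQ.le (bernoulli_aux lam hl0 hl1 hK)
  refine ⟨key, hnn, by linarith, ?_⟩
  intro hpq
  have hSQ' : S = Q := by
    rw [hSdef, hQdef]
    apply Finset.sum_congr rfl
    intro i _
    rw [hpq i, ← Real.rpow_add (hq i)]
    norm_num
  have hK1 : K = 1 := by
    rw [hKdef, alphaK0, ← hSdef, ← hQdef, hSQ', div_self hQ.ne', Real.one_rpow]
  refine ⟨hK1, ?_⟩
  rw [key, hK1, Real.one_rpow]
  ring_nf
end
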